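/- Let ∧ be a semilattice operation on a nonempty set A, and let S = ⟨∧⟩ be the clone generated by ∧. Then the partial order induced by the S-minor relation on the S-equivalence classes of operations on A satisfies the descending chain condition: every descending chain [f_1] ⊇ [f_2] ⊇ ... (i.e., f_{k+1} an S-minor of f_k for all k) is eventually constant (f_k S-equivalent to f_{k+1} for all sufficiently large k). -/

import Mathlib

variable {A : Type*}

/-- Composition of an n-ary operation with n m-ary operations. -/
def Comp {n m : ℕ} (f : (Fin n → A) → A) (g : Fin n → (Fin m → A) → A) :
    (Fin m → A) → A := fun a => f fun i => g i a

/-- A clone: contains all projections and is closed under composition. -/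
def IsClone (C : ∀ n, Set ((Fin n → A) → A)) : Prop :=
  (∀ (n : ℕ) (i : Fin n), (fun a : Fin n → A => a i) ∈ C n) ∧
  ∀ (n m : ℕ) (f : (Fin n → A) → A) (g : Fin n → (Fin m → A) → A),
    f ∈ C n → (∀ i, g i ∈ C m) → Comp f g ∈ C m

/-- `f` is a `C`-minor of `g`. -/
def Minor (C : ∀ n, Set ((Fin n → A) → A)) {n m : ℕ}
    (f : (Fin n → A) → A) (g : (Fin m → A) → A) : Prop :=
  ∃ h : Fin m → (Fin n → A) → A, (∀ i, h i ∈ C n) ∧ f = Comp g h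

/-- `f` and `g` are `C`-equivalent. -/
def CEquiv (C : ∀ n, Set ((Fin n → A) → A)) {n m : ℕ}
    (f : (Fin n → A) → A) (g : (Fin m → A) → A) : Prop :=
  Minor C f g ∧ Minor C g f

/-- The clone generated by a family of operations. -/
def CloneGen (F : ∀ n, Set ((Fin n → A) → A)) : ∀ n, Set ((Fin n → A) → A) :=
  fun n => {f | ∀ C, IsClone C → (∀ k, F k ⊆ C k) → f ∈ C n}

/-- The family consisting of just the binary semilattice (meet) operation. -/
def meetFam (A : Type*) [SemilatticeInf A] : ∀ n, Set ((Fin n → A) → A)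
  | 2 => {fun a => a 0 ⊓ a 1}
  | _ => ∅

/-- The clone generated by the semilattice operation `⊓`. -/
def SClone (A : Type*) [SemilatticeInf A] : ∀ n, Set ((Fin n → A) → A) :=
  CloneGen (meetFam A)

/-!
The clone generated by `⊓` consists exactly of the operations `x ↦ ⨅ j ∈ B, x j` with `B`
nonempty, so an `S`-minor of an `m`-ary `g` has the form `x ↦ g (i ↦ ⨅ j ∈ B i, x j)`.
Two variables `j, j'` that lie in exactly the same sets `B i` can be identified without changing
the equivalence class, so every `S`-minor of `g` of positive arity is equivalent to one whose
variables are indexed by `Finset (Fin m)`. Hence the `S`-minors of `g` fall into finitely many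
equivalence classes. Along a descending chain, the set of those classes lying below the `k`-th
member decreases with `k`, so it is eventually constant, and from then on each member lies below
its successor.
-/

theorem eventually_rel_succ_of_finite_classes {X ι : Type*} [Finite ι] {R : X → X → Prop}
    (htrans : ∀ {x y z}, R x y → R y z → R x z) {x : ℕ → X}
    (hdesc : ∀ k, R (x (k + 1)) (x k)) (c : ι → X)
    (hc : ∀ k, ∃ i, R (x k) (c i) ∧ R (c i) (x k)) :
    ∃ N, ∀ k ≥ N, R (x k) (x (k + 1)) := by
  set below : ℕ → Set ι := fun k => {i | R (c i) (x k)}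
  have hanti : Antitone below :=
    antitone_nat_of_succ_le fun k _ hi => htrans hi (hdesc k)
  obtain ⟨N, hN⟩ := WellFoundedLT.antitone_chain_condition hanti
  refine ⟨N, fun k hk => ?_⟩
  obtain ⟨i, hki, hik⟩ := hc k
  have hik' : i ∈ below (k + 1) := by
    rw [← hN (k + 1) (by omega), hN k hk]
    exact hik
  exact htrans hki hik'

theorem isClone_cloneGen (F : ∀ n, Set ((Fin n → A) → A)) : IsClone (CloneGen F) :=
  ⟨fun n i _ hC _ => hC.1 n i,
    fun n m f g hf hg C hC hF => hC.2 n m f g (hf C hC hF) fun i => hg i C hC hF⟩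

theorem subset_cloneGen (F : ∀ n, Set ((Fin n → A) → A)) (k : ℕ) : F k ⊆ CloneGen F k :=
  fun _ hf _ _ hF => hF k hf

theorem cloneGen_subset {F C : ∀ n, Set ((Fin n → A) → A)} (hC : IsClone C)
    (hF : ∀ k, F k ⊆ C k) (n : ℕ) : CloneGen F n ⊆ C n :=
  fun _ hf => hf C hC hF

theorem IsClone.minor_refl {C : ∀ n, Set ((Fin n → A) → A)} (hC : IsClone C) {n : ℕ}
    (f : (Fin n → A) → A) : Minor C f f :=
  ⟨fun i a => a i, hC.1 n, rfl⟩

theorem IsClone.minor_trans {C : ∀ n, Set ((Fin n → A) → A)} (hC : IsClone C) {n m p : ℕ}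
    {f : (Fin n → A) → A} {g : (Fin m → A) → A} {e : (Fin p → A) → A} :
    Minor C f g → Minor C g e → Minor C f e := by
  rintro ⟨h, hh, rfl⟩ ⟨H, hH, rfl⟩
  exact ⟨fun i => Comp (H i) h, fun i => hC.2 m n (H i) h (hH i) hh, rfl⟩

section Meet

variable [SemilatticeInf A]

def meetOp {n : ℕ} (B : Finset (Fin n)) (hB : B.Nonempty) : (Fin n → A) → A :=
  fun a => B.inf' hB a

def meetOps (A : Type*) [SemilatticeInf A] (n : ℕ) : Set ((Fin n → A) → A) :=
  {f | ∃ B hB, f = meetOp B hB}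

theorem comp_meetOp {n m : ℕ} {B : Finset (Fin m)} (hB : B.Nonempty)
    {D : Fin m → Finset (Fin n)} (hD : ∀ i, (D i).Nonempty) :
    Comp (meetOp (A := A) B hB) (fun i => meetOp (D i) (hD i)) =
      meetOp (B.biUnion D) (hB.biUnion fun i _ => hD i) :=
  funext fun a => (Finset.inf'_biUnion a hB hD).symm

theorem isClone_meetOps : IsClone (meetOps A) := by
  refine ⟨fun n i => ⟨{i}, Finset.singleton_nonempty i, rfl⟩, ?_⟩
  rintro n m f g ⟨B, hB, rfl⟩ hg
  choose D hD hgD using hg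
  obtain rfl : g = fun i => meetOp (D i) (hD i) := funext hgD
  exact ⟨_, _, comp_meetOp hB hD⟩

theorem sClone_subset_meetOps (n : ℕ) : SClone A n ⊆ meetOps A n := by
  refine cloneGen_subset isClone_meetOps (fun k => ?_) n
  match k with
  | 2 =>
    rintro f rfl
    exact ⟨{0, 1}, by simp, funext fun a => by simp [meetOp, Finset.inf'_insert]⟩
  | 0 | 1 | k + 3 => exact fun _ h => h.elim

theorem isClone_sClone : IsClone (SClone A) :=
  isClone_cloneGen _

theorem meetOp_mem_sClone {n : ℕ} (B : Finset (Fin n)) (hB : B.Nonempty) :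
    meetOp B hB ∈ SClone A n := by
  induction hB using Finset.Nonempty.cons_induction with
  | singleton i => exact isClone_sClone.1 n i
  | cons i s hi hs ih =>
    have hcons : meetOp (s.cons i hi) (Finset.cons_nonempty hi) =
        Comp (fun a : Fin 2 → A => a 0 ⊓ a 1) ![fun a => a i, meetOp s hs] := by
      funext a
      simp only [meetOp, Finset.inf'_cons hs]
      rfl
    rw [hcons]
    refine isClone_sClone.2 2 n _ _ (subset_cloneGen (meetFam A) 2 rfl) ?_
    intro j
    fin_cases j
    exacts [isClone_sClone.1 n i, ih]

theorem minor_sClone_iff {n m : ℕ} {f : (Fin n → A) → A} {g : (Fin m → A) → A} :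
    Minor (SClone A) f g ↔ ∃ (B : Fin m → Finset (Fin n)) (hB : ∀ i, (B i).Nonempty),
      f = Comp g fun i => meetOp (B i) (hB i) := by
  constructor
  · rintro ⟨h, hh, rfl⟩
    choose B hB hBh using fun i => sClone_subset_meetOps n (hh i)
    exact ⟨B, hB, by rw [← funext hBh]⟩
  · rintro ⟨B, hB, rfl⟩
    exact ⟨_, fun i => meetOp_mem_sClone (B i) (hB i), rfl⟩

section Reduction

variable {n m N : ℕ} (g : (Fin m → A) → A)

theorem comp_comp_meetOp {B : Fin m → Finset (Fin n)} (hB : ∀ i, (B i).Nonempty)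
    {D : Fin n → Finset (Fin N)} (hD : ∀ j, (D j).Nonempty) :
    Comp (Comp g fun i => meetOp (B i) (hB i)) (fun j => meetOp (D j) (hD j)) =
      Comp g fun i => meetOp ((B i).biUnion D) ((hB i).biUnion fun j _ => hD j) :=
  congrArg (Comp g) (funext fun i => comp_meetOp (hB i) hD)

theorem comp_meetOp_congr {B B' : Fin m → Finset (Fin n)} (hB : ∀ i, (B i).Nonempty)
    (hB' : ∀ i, (B' i).Nonempty) (h : B = B') :
    (Comp g fun i => meetOp (B i) (hB i)) = Comp g fun i => meetOp (B' i) (hB' i) := by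
  subst h
  rfl

theorem minor_comp_meetOp_image (φ : Fin n → Fin N) (B : Fin m → Finset (Fin n))
    (hB : ∀ i, (B i).Nonempty) :
    Minor (SClone A) (Comp g fun i => meetOp ((B i).image φ) ((hB i).image φ))
      (Comp g fun i => meetOp (B i) (hB i)) := by
  refine minor_sClone_iff.2 ⟨fun j => {φ j}, fun j => Finset.singleton_nonempty _, ?_⟩
  rw [comp_comp_meetOp]
  exact comp_meetOp_congr g _ _ (funext fun i => Finset.biUnion_singleton.symm)

theorem comp_meetOp_minor_image [NeZero n] (φ : Fin n → Fin N) (B : Fin m → Finset (Fin n))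
    (hB : ∀ i, (B i).Nonempty) (hsat : ∀ i j j', φ j = φ j' → j ∈ B i → j' ∈ B i) :
    Minor (SClone A) (Comp g fun i => meetOp (B i) (hB i))
      (Comp g fun i => meetOp ((B i).image φ) ((hB i).image φ)) := by
  classical
  let fiber (k : Fin N) : Finset (Fin n) := Finset.univ.filter (φ · = k)
  let D (k : Fin N) : Finset (Fin n) := if (fiber k).Nonempty then fiber k else Finset.univ
  have hD : ∀ k, (D k).Nonempty := fun k => by
    unfold D
    split_ifs with h
    exacts [h, Finset.univ_nonempty]
  have hfiber : ∀ j, D (φ j) = fiber (φ j) := fun j =>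
    if_pos ⟨j, Finset.mem_filter.2 ⟨Finset.mem_univ j, rfl⟩⟩
  refine minor_sClone_iff.2 ⟨D, hD, ?_⟩
  rw [comp_comp_meetOp]
  refine comp_meetOp_congr g _ _ (funext fun i => ?_)
  -- `hsat` says that `B i` is the union of the fibres of `φ` it meets
  rw [Finset.image_biUnion]
  ext j'
  simp only [hfiber, fiber, Finset.mem_biUnion, Finset.mem_filter, Finset.mem_univ, true_and]
  exact ⟨fun hj' => ⟨j', hj', rfl⟩, fun ⟨j, hj, hjj'⟩ => hsat i j j' hjj'.symm hj⟩

theorem exists_cEquiv_comp_meetOp_finset_index [NeZero n] (B : Fin m → Finset (Fin n))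
    (hB : ∀ i, (B i).Nonempty) :
    ∃ (B' : Fin m → Finset (Fin (Fintype.card (Finset (Fin m)))))
      (hB' : ∀ i, (B' i).Nonempty),
      CEquiv (SClone A) (Comp g fun i => meetOp (B i) (hB i))
        (Comp g fun i => meetOp (B' i) (hB' i)) := by
  classical
  let φ (j : Fin n) := Fintype.equivFin _ (Finset.univ.filter (j ∈ B ·))
  refine ⟨fun i => (B i).image φ, fun i => (hB i).image φ,
    comp_meetOp_minor_image g φ B hB fun i j j' h hj => ?_, minor_comp_meetOp_image g φ B hB⟩
  have := congrArg (i ∈ ·) ((Fintype.equivFin _).injective h)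
  simpa [hj] using this

end Reduction

/-- `none` stands for `g` itself, the only possible nullary `S`-minor of `g`. -/
def canonicalMinor {m : ℕ} (g : (Fin m → A) → A) :
    Option {B : Fin m → Finset (Fin (Fintype.card (Finset (Fin m)))) // ∀ i, (B i).Nonempty} →
      Σ n, (Fin n → A) → A
  | none => ⟨m, g⟩
  | some B => ⟨_, Comp g fun i => meetOp (B.1 i) (B.2 i)⟩

theorem exists_cEquiv_canonicalMinor {n m : ℕ} {f : (Fin n → A) → A} {g : (Fin m → A) → A}
    (hfg : Minor (SClone A) f g) : ∃ i, CEquiv (SClone A) f (canonicalMinor g i).2 := by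
  obtain ⟨B, hB, rfl⟩ := minor_sClone_iff.1 hfg
  rcases n.eq_zero_or_pos with rfl | hn
  · obtain rfl : m = 0 := by
      by_contra hm
      obtain ⟨j, -⟩ := hB ⟨0, Nat.pos_of_ne_zero hm⟩
      exact j.elim0
    exact ⟨none, hfg, fun i => i.elim0, fun i => i.elim0,
      funext fun a => congrArg g (Subsingleton.elim _ _)⟩
  · have : NeZero n := ⟨hn.ne'⟩
    obtain ⟨B', hB', h⟩ := exists_cEquiv_comp_meetOp_finset_index g B hB
    exact ⟨some ⟨B', hB'⟩, h⟩

end Meet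

theorem stmt12_general {A : Type*} [SemilatticeInf A]
    (F : ℕ → Σ n, (Fin n → A) → A)
    (hdesc : ∀ k, Minor (SClone A) (F (k + 1)).2 (F k).2) :
    ∃ N : ℕ, ∀ k ≥ N, CEquiv (SClone A) (F k).2 (F (k + 1)).2 := by
  have hbelow : ∀ k, Minor (SClone A) (F k).2 (F 0).2 := fun k => by
    induction k with
    | zero => exact isClone_sClone.minor_refl _
    | succ k ih => exact isClone_sClone.minor_trans (hdesc k) ih
  obtain ⟨N, hN⟩ := eventually_rel_succ_of_finite_classes
    (R := fun x y : Σ n, (Fin n → A) → A => Minor (SClone A) x.2 y.2) (x := F)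
    isClone_sClone.minor_trans hdesc (canonicalMinor (F 0).2)
    fun k => exists_cEquiv_canonicalMinor (hbelow k)
  exact ⟨N, fun k hk => ⟨hN k hk, hdesc k⟩⟩

/-- The `S`-minor partial order on `S`-equivalence classes satisfies the
descending chain condition: every descending chain of operations is eventually
constant up to `S`-equivalence. -/
theorem stmt12 {A : Type*} [Nonempty A] [SemilatticeInf A]
    (F : ℕ → Σ n, (Fin n → A) → A)
    (hdesc : ∀ k, Minor (SClone A) (F (k + 1)).2 (F k).2) :
    ∃ N : ℕ, ∀ k ≥ N, CEquiv (SClone A) (F k).2 (F (k + 1)).2 :=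
  stmt12_general F hdesc
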